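/- With the same setup of a generalized Sasakian space form curvature tensor $R$ with constants $c_1, c_2, c_3$ on an inner product space with almost contact structure $(\phi, \xi, \eta)$: if $\{v_1,\dots,v_\ell\}$ is an orthonormal family whose span is orthogonal to $\xi$ (i.e. $\eta(v_i) = 0$ for all $i$), then $\sum_{i,j=1}^{\ell} R(v_i,v_j,v_j,v_i) = c_1 \ell(\ell-1) + 3c_2\|Q\|^2$, where $Qv_i$ denotes the orthogonal projection of $\phi v_i$ onto $\mathrm{span}\{v_1,\dots,v_\ell\}$ and $\|Q\|^2 = \sum_i \|Qv_i\|^2$. -/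

import Mathlib

open scoped InnerProductSpace
open Submodule

/-! On vectors orthogonal to `ξ` every `η`-term of `R` vanishes, and there `φ² = -1`; combined with
the compatibility of `g` this makes `⟪z, φ z⟫` equal to its own negative. Hence
`R(vᵢ, vⱼ, vⱼ, vᵢ) = c₁ (1 - δᵢⱼ) + 3 c₂ ⟪vᵢ, φ vⱼ⟫²`, and summing over `i` first turns the `c₂`-part
into `∑ⱼ ‖Q vⱼ‖²` by Parseval's identity in `span {v₁, …, v_ℓ}`. -/

theorem Orthonormal.norm_orthogonalProjectionOnto_span_sq {𝕜 E ι : Type*} [RCLike 𝕜]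
    [NormedAddCommGroup E] [InnerProductSpace 𝕜 E] [Fintype ι] {v : ι → E}
    (hv : Orthonormal 𝕜 v) [(span 𝕜 (Set.range v)).HasOrthogonalProjection] (x : E) :
    ‖((span 𝕜 (Set.range v)).orthogonalProjectionOnto x : E)‖ ^ 2 = ∑ i, ‖⟪v i, x⟫_𝕜‖ ^ 2 := by
  let b : OrthonormalBasis ι 𝕜 (span 𝕜 (Set.range v)) :=
    OrthonormalBasis.mk (by convert! orthonormal_span hv; simp [Module.Basis.span_apply])
      (Module.Basis.span hv.linearIndependent).span_eq.ge
  have hb : ∀ i, (b i : E) = v i := fun i => by simp [b, Module.Basis.span_apply]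
  rw [← coe_norm, ← b.sum_sq_norm_inner_right]
  simp only [inner_orthogonalProjectionOnto_eq_of_mem_left, hb]

theorem Orthonormal.sum_sum_norm_sq_mul_norm_sq_sub_inner_sq {E ι : Type*}
    [NormedAddCommGroup E] [InnerProductSpace ℝ E] [Fintype ι] {v : ι → E}
    (hv : Orthonormal ℝ v) :
    ∑ i, ∑ j, (‖v i‖ ^ 2 * ‖v j‖ ^ 2 - ⟪v i, v j⟫_ℝ ^ 2)
      = Fintype.card ι * ((Fintype.card ι : ℝ) - 1) := by
  classical
  simp only [hv.1, one_pow, mul_one, orthonormal_iff_ite.mp hv, ite_pow, ne_eq,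
    OfNat.ofNat_ne_zero, not_false_eq_true, zero_pow, Finset.sum_sub_distrib, Finset.sum_const,
    Finset.card_univ, nsmul_eq_mul, Finset.sum_ite_eq, Finset.mem_univ, ↓reduceIte]
  ring

section AlmostContact

variable {V : Type*} [NormedAddCommGroup V] [InnerProductSpace ℝ V]

theorem inner_map_self_eq_zero_of_inner_eq_zero {φ : V →ₗ[ℝ] V} {ξ : V}
    (hphi2 : ∀ z, φ (φ z) = -z + ⟪z, ξ⟫_ℝ • ξ)
    (hcompat : ∀ z w, ⟪φ z, φ w⟫_ℝ = ⟪z, w⟫_ℝ - ⟪z, ξ⟫_ℝ * ⟪w, ξ⟫_ℝ)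
    {z : V} (hz : ⟪z, ξ⟫_ℝ = 0) : ⟪z, φ z⟫_ℝ = 0 := by
  have h := hcompat (φ z) z
  rw [hphi2, hz, zero_smul, add_zero, inner_neg_left, mul_zero, sub_zero,
    real_inner_comm z (φ z)] at h
  linarith

def generalizedSasakianCurvature (c₁ c₂ c₃ : ℝ) (φ : V →ₗ[ℝ] V) (ξ Z1 Z2 Z3 Z4 : V) : ℝ :=
  c₁ * (⟪Z2, Z3⟫_ℝ * ⟪Z1, Z4⟫_ℝ - ⟪Z1, Z3⟫_ℝ * ⟪Z2, Z4⟫_ℝ)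
    + c₂ * (⟪Z1, φ Z3⟫_ℝ * ⟪φ Z2, Z4⟫_ℝ - ⟪Z2, φ Z3⟫_ℝ * ⟪φ Z1, Z4⟫_ℝ
        + 2 * ⟪Z1, φ Z2⟫_ℝ * ⟪φ Z3, Z4⟫_ℝ)
    + c₃ * (⟪Z1, ξ⟫_ℝ * ⟪Z3, ξ⟫_ℝ * ⟪Z2, Z4⟫_ℝ - ⟪Z2, ξ⟫_ℝ * ⟪Z3, ξ⟫_ℝ * ⟪Z1, Z4⟫_ℝ
        + ⟪Z1, Z3⟫_ℝ * ⟪Z2, ξ⟫_ℝ * ⟪Z4, ξ⟫_ℝ - ⟪Z2, Z3⟫_ℝ * ⟪Z1, ξ⟫_ℝ * ⟪Z4, ξ⟫_ℝ)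

theorem generalizedSasakianCurvature_sectional (c₁ c₂ c₃ : ℝ) {φ : V →ₗ[ℝ] V} {ξ x y : V}
    (hx : ⟪x, ξ⟫_ℝ = 0) (hy : ⟪y, ξ⟫_ℝ = 0) (hyφ : ⟪y, φ y⟫_ℝ = 0) :
    generalizedSasakianCurvature c₁ c₂ c₃ φ ξ x y y x
      = c₁ * (‖x‖ ^ 2 * ‖y‖ ^ 2 - ⟪x, y⟫_ℝ ^ 2) + 3 * c₂ * ⟪x, φ y⟫_ℝ ^ 2 := by
  rw [generalizedSasakianCurvature, hx, hy, hyφ, real_inner_comm (φ y), real_inner_comm y x,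
    real_inner_self_eq_norm_sq, real_inner_self_eq_norm_sq]
  ring

end AlmostContact

theorem stmt_14_general {V : Type*} [NormedAddCommGroup V] [InnerProductSpace ℝ V]
    [FiniteDimensional ℝ V]
    (c₁ c₂ c₃ : ℝ) (φ : V →ₗ[ℝ] V) (ξ : V)
    (hphi2 : ∀ z, φ (φ z) = -z + ⟪z, ξ⟫_ℝ • ξ)
    (hcompat : ∀ z w, ⟪φ z, φ w⟫_ℝ = ⟪z, w⟫_ℝ - ⟪z, ξ⟫_ℝ * ⟪w, ξ⟫_ℝ)
    (ℓ : ℕ) (v : Fin ℓ → V) (hv : Orthonormal ℝ v)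
    (hxi : ∀ i, ⟪v i, ξ⟫_ℝ = 0)
    (R : V → V → V → V → ℝ)
    (hR : ∀ Z1 Z2 Z3 Z4, R Z1 Z2 Z3 Z4 =
      c₁ * (⟪Z2, Z3⟫_ℝ * ⟪Z1, Z4⟫_ℝ - ⟪Z1, Z3⟫_ℝ * ⟪Z2, Z4⟫_ℝ)
      + c₂ * (⟪Z1, φ Z3⟫_ℝ * ⟪φ Z2, Z4⟫_ℝ - ⟪Z2, φ Z3⟫_ℝ * ⟪φ Z1, Z4⟫_ℝ
          + 2 * ⟪Z1, φ Z2⟫_ℝ * ⟪φ Z3, Z4⟫_ℝ)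
      + c₃ * (⟪Z1, ξ⟫_ℝ * ⟪Z3, ξ⟫_ℝ * ⟪Z2, Z4⟫_ℝ - ⟪Z2, ξ⟫_ℝ * ⟪Z3, ξ⟫_ℝ * ⟪Z1, Z4⟫_ℝ
          + ⟪Z1, Z3⟫_ℝ * ⟪Z2, ξ⟫_ℝ * ⟪Z4, ξ⟫_ℝ - ⟪Z2, Z3⟫_ℝ * ⟪Z1, ξ⟫_ℝ * ⟪Z4, ξ⟫_ℝ)) :
    ∑ i : Fin ℓ, ∑ j : Fin ℓ, R (v i) (v j) (v j) (v i)
      = c₁ * ℓ * ((ℓ : ℝ) - 1)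
        + 3 * c₂ * ∑ i : Fin ℓ,
            ‖(Submodule.orthogonalProjectionOnto (Submodule.span ℝ (Set.range v)) (φ (v i)) : V)‖ ^ 2
        := by
  have hRv : ∀ i j, R (v i) (v j) (v j) (v i)
      = c₁ * (‖v i‖ ^ 2 * ‖v j‖ ^ 2 - ⟪v i, v j⟫_ℝ ^ 2) + 3 * c₂ * ⟪v i, φ (v j)⟫_ℝ ^ 2 :=
    fun i j => (hR _ _ _ _).trans <| generalizedSasakianCurvature_sectional c₁ c₂ c₃ (hxi i)
      (hxi j) (inner_map_self_eq_zero_of_inner_eq_zero hphi2 hcompat (hxi j))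
  simp only [hRv, Finset.sum_add_distrib, ← Finset.mul_sum,
    hv.sum_sum_norm_sq_mul_norm_sq_sub_inner_sq, Fintype.card_fin,
    hv.norm_orthogonalProjectionOnto_span_sq, Real.norm_eq_abs, sq_abs, real_inner_comm (φ _)]
  rw [Finset.sum_comm]
  ring

/-- For the generalized Sasakian space form curvature tensor with constants
`c₁, c₂, c₃` on an inner product space with almost contact structure `(φ, ξ, η)`,
and an orthonormal family `v₁,…,v_ℓ` orthogonal to `ξ`:
`∑_{i,j} R(vᵢ,vⱼ,vⱼ,vᵢ) = c₁ ℓ(ℓ-1) + 3c₂ ‖Q‖²`, where `Q vᵢ` is the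
projection of `φ vᵢ` onto `span{v₁,…,v_ℓ}`. -/
theorem stmt_14 {V : Type*} [NormedAddCommGroup V] [InnerProductSpace ℝ V]
    [FiniteDimensional ℝ V]
    (c₁ c₂ c₃ : ℝ) (φ : V →ₗ[ℝ] V) (ξ : V) (hξ : ‖ξ‖ = 1)
    (hphi2 : ∀ z, φ (φ z) = -z + ⟪z, ξ⟫_ℝ • ξ)
    (hcompat : ∀ z w, ⟪φ z, φ w⟫_ℝ = ⟪z, w⟫_ℝ - ⟪z, ξ⟫_ℝ * ⟪w, ξ⟫_ℝ)
    (ℓ : ℕ) (v : Fin ℓ → V) (hv : Orthonormal ℝ v)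
    (hxi : ∀ i, ⟪v i, ξ⟫_ℝ = 0)
    (R : V → V → V → V → ℝ)
    (hR : ∀ Z1 Z2 Z3 Z4, R Z1 Z2 Z3 Z4 =
      c₁ * (⟪Z2, Z3⟫_ℝ * ⟪Z1, Z4⟫_ℝ - ⟪Z1, Z3⟫_ℝ * ⟪Z2, Z4⟫_ℝ)
      + c₂ * (⟪Z1, φ Z3⟫_ℝ * ⟪φ Z2, Z4⟫_ℝ - ⟪Z2, φ Z3⟫_ℝ * ⟪φ Z1, Z4⟫_ℝ
          + 2 * ⟪Z1, φ Z2⟫_ℝ * ⟪φ Z3, Z4⟫_ℝ)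
      + c₃ * (⟪Z1, ξ⟫_ℝ * ⟪Z3, ξ⟫_ℝ * ⟪Z2, Z4⟫_ℝ - ⟪Z2, ξ⟫_ℝ * ⟪Z3, ξ⟫_ℝ * ⟪Z1, Z4⟫_ℝ
          + ⟪Z1, Z3⟫_ℝ * ⟪Z2, ξ⟫_ℝ * ⟪Z4, ξ⟫_ℝ - ⟪Z2, Z3⟫_ℝ * ⟪Z1, ξ⟫_ℝ * ⟪Z4, ξ⟫_ℝ)) :
    ∑ i : Fin ℓ, ∑ j : Fin ℓ, R (v i) (v j) (v j) (v i)
      = c₁ * ℓ * ((ℓ : ℝ) - 1)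
        + 3 * c₂ * ∑ i : Fin ℓ,
            ‖(Submodule.orthogonalProjectionOnto (Submodule.span ℝ (Set.range v)) (φ (v i)) : V)‖ ^ 2 :=
  stmt_14_general c₁ c₂ c₃ φ ξ hphi2 hcompat ℓ v hv hxi R hR
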